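/- Let U be an open subset of a finite-dimensional real vector space E, g a smooth possibly degenerate metric on U, and D a Koszul derivative for g. Then the Riemann curvature tensor R(X,Y,Z,T) := g(D_X D_Y Z − D_Y D_X Z − D_{[X,Y]} Z, T) satisfies the first Bianchi identity: R(Y,Z,X,T) + R(Z,X,Y,T) + R(X,Y,Z,T) = 0 for all smooth vector fields X, Y, Z, T. -/

import Mathlib

variable {E : Type*} [NormedAddCommGroup E] [NormedSpace ℝ E] [FiniteDimensional ℝ E]

/-- The action `(Xf)(p) = df_p(X(p))` of a vector field on a function. -/
noncomputable def vAct (X : E → E) (f : E → ℝ) : E → ℝ := fun p => fderiv ℝ f p (X p)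

/-- The Lie bracket `[X,Y](p) = dY_p(X(p)) − dX_p(Y(p))` of vector fields. -/
noncomputable def vBracket (X Y : E → E) : E → E :=
  fun p => fderiv ℝ Y p (X p) - fderiv ℝ X p (Y p)

/-- The function `p ↦ g_p(Y(p), Z(p))`. -/
noncomputable def gFun (g : E → E →L[ℝ] E →L[ℝ] ℝ) (Y Z : E → E) : E → ℝ := fun p => g p (Y p) (Z p)

/-- The Koszul form
`K(X,Y,Z) := ½{X g(Y,Z) + Y g(Z,X) − Z g(X,Y) − g(X,[Y,Z]) + g(Y,[Z,X]) + g(Z,[X,Y])}`. -/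
noncomputable def koszul (g : E → E →L[ℝ] E →L[ℝ] ℝ) (X Y Z : E → E) : E → ℝ := fun p =>
  (1/2 : ℝ) * (vAct X (gFun g Y Z) p + vAct Y (gFun g Z X) p - vAct Z (gFun g X Y) p
    - gFun g X (vBracket Y Z) p + gFun g Y (vBracket Z X) p + gFun g Z (vBracket X Y) p)

/-- The Riemann curvature tensor of a Koszul derivative `D`:
`R(X,Y,Z,T) := g(D_X D_Y Z − D_Y D_X Z − D_[X,Y] Z, T)`. -/
noncomputable def riem (g : E → E →L[ℝ] E →L[ℝ] ℝ) (D : (E → E) → (E → E) → (E → E))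
    (X Y Z T : E → E) : E → ℝ := fun p =>
  g p (D X (D Y Z) p - D Y (D X Z) p - D (vBracket X Y) Z p) (T p)

/-! Adding the Koszul formula to itself with the last two arguments swapped gives metric
compatibility `X g(Y,Z) = g(D_X Y, Z) + g(Y, D_X Z)`; subtracting it from itself with the first
two swapped gives torsion-freeness `g(D_X Y, Z) = g(D_Y X, Z) + g([X,Y], Z)`. Since `g` may be
degenerate, these hold only after pairing with `g`, and `D` need not be additive. Compatibility
still shows that `g(D_X ·, T)` only depends on `g(·, S)` for smooth `S`, so in the cyclic sum of
curvatures `g(D_X D_Y Z − D_X D_Z Y, T)` becomes `g(D_X [Y,Z], T)`; torsion-freeness turns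
`g(D_X [Y,Z] − D_[Y,Z] X, T)` into `g([X,[Y,Z]], T)`, and the Jacobi identity finishes the proof. -/

open ContinuousLinearMap

section VectorFields

variable {V : Type*} [NormedAddCommGroup V] [NormedSpace ℝ V] {U : Set V}

lemma ContDiffOn.differentiableAt_of_isOpen {F : Type*} [NormedAddCommGroup F]
    [NormedSpace ℝ F] {f : V → F} (hf : ContDiffOn ℝ (⊤ : ℕ∞) f U) (hU : IsOpen U) {p : V}
    (hp : p ∈ U) : DifferentiableAt ℝ f p :=
  (hf.contDiffAt (hU.mem_nhds hp)).differentiableAt (by simp)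

lemma contDiffOn_gFun {g : V → V →L[ℝ] V →L[ℝ] ℝ} {A B : V → V}
    (hg : ContDiffOn ℝ (⊤ : ℕ∞) g U) (hA : ContDiffOn ℝ (⊤ : ℕ∞) A U)
    (hB : ContDiffOn ℝ (⊤ : ℕ∞) B U) : ContDiffOn ℝ (⊤ : ℕ∞) (gFun g A B) U :=
  (hg.clm_apply hA).clm_apply hB

lemma contDiffOn_vBracket (hU : IsOpen U) {A B : V → V}
    (hA : ContDiffOn ℝ (⊤ : ℕ∞) A U) (hB : ContDiffOn ℝ (⊤ : ℕ∞) B U) :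
    ContDiffOn ℝ (⊤ : ℕ∞) (vBracket A B) U :=
  ((hB.fderiv_of_isOpen hU (by simp)).clm_apply hA).sub
    ((hA.fderiv_of_isOpen hU (by simp)).clm_apply hB)

lemma vAct_congr_of_eqOn (hU : IsOpen U) {f₁ f₂ : V → ℝ} (h : Set.EqOn f₁ f₂ U)
    (X : V → V) {p : V} (hp : p ∈ U) : vAct X f₁ p = vAct X f₂ p := by
  simp only [vAct, (Filter.eventuallyEq_of_mem (hU.mem_nhds hp) h).fderiv_eq]

lemma vAct_add (X : V → V) {f₁ f₂ : V → ℝ} {p : V} (h₁ : DifferentiableAt ℝ f₁ p)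
    (h₂ : DifferentiableAt ℝ f₂ p) : vAct X (f₁ + f₂) p = vAct X f₁ p + vAct X f₂ p := by
  simp only [vAct, fderiv_add h₁ h₂, add_apply]

lemma vBracket_swap (A B : V → V) : vBracket A B = -vBracket B A := by
  ext p
  simp only [vBracket, Pi.neg_apply]
  abel

lemma fderiv_vBracket_apply (hU : IsOpen U) {A B : V → V}
    (hA : ContDiffOn ℝ (⊤ : ℕ∞) A U) (hB : ContDiffOn ℝ (⊤ : ℕ∞) B U)
    {p : V} (hp : p ∈ U) (v : V) :
    fderiv ℝ (vBracket A B) p v =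
      fderiv ℝ (fderiv ℝ B) p v (A p) + fderiv ℝ B p (fderiv ℝ A p v)
        - fderiv ℝ (fderiv ℝ A) p v (B p) - fderiv ℝ A p (fderiv ℝ B p v) := by
  have hA' := hA.differentiableAt_of_isOpen hU hp
  have hB' := hB.differentiableAt_of_isOpen hU hp
  have hA'' := (hA.fderiv_of_isOpen hU (by simp)).differentiableAt_of_isOpen hU hp
  have hB'' := (hB.fderiv_of_isOpen hU (by simp)).differentiableAt_of_isOpen hU hp
  change fderiv ℝ (fun q => fderiv ℝ B q (A q) - fderiv ℝ A q (B q)) p v = _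
  rw [fderiv_fun_sub (hB''.clm_apply hA') (hA''.clm_apply hB'), fderiv_clm_apply hB'' hA',
    fderiv_clm_apply hA'' hB']
  simp only [sub_apply, add_apply, coe_comp, Function.comp_apply, flip_apply]
  abel

/-- The second derivatives cancel by symmetry of `d²X`, `d²Y`, `d²Z` (Schwarz). -/
lemma vBracket_jacobi (hU : IsOpen U) {X Y Z : V → V}
    (hX : ContDiffOn ℝ (⊤ : ℕ∞) X U) (hY : ContDiffOn ℝ (⊤ : ℕ∞) Y U)
    (hZ : ContDiffOn ℝ (⊤ : ℕ∞) Z U) {p : V} (hp : p ∈ U) :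
    vBracket X (vBracket Y Z) p + vBracket Y (vBracket Z X) p
      + vBracket Z (vBracket X Y) p = 0 := by
  have symm : ∀ {A : V → V}, ContDiffOn ℝ (⊤ : ℕ∞) A U → ∀ v w : V,
      fderiv ℝ (fderiv ℝ A) p v w = fderiv ℝ (fderiv ℝ A) p w v := fun hA =>
    (hA.contDiffAt (hU.mem_nhds hp)).isSymmSndFDerivAt
      (by rw [minSmoothness_of_isRCLikeNormedField]; exact WithTop.coe_le_coe.mpr le_top)
  simp only [vBracket, fderiv_vBracket_apply hU hY hZ hp, fderiv_vBracket_apply hU hZ hX hp,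
    fderiv_vBracket_apply hU hX hY hp, map_sub, symm hX (Y p), symm hY (Z p), symm hZ (X p)]
  abel

end VectorFields

section Koszul

variable {V : Type*} [NormedAddCommGroup V] [NormedSpace ℝ V] {g : V → V →L[ℝ] V →L[ℝ] ℝ}

lemma gFun_comm (hsymm : ∀ p : V, ∀ u v : V, g p u v = g p v u) (A B : V → V) :
    gFun g A B = gFun g B A :=
  funext fun q => hsymm q _ _

lemma gFun_vBracket_swap (A B C : V → V) :
    gFun g A (vBracket B C) = -gFun g A (vBracket C B) := by
  ext p
  simp [gFun, vBracket_swap B C]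

lemma koszul_add_koszul_swap (hsymm : ∀ p : V, ∀ u v : V, g p u v = g p v u)
    (X Y Z : V → V) (p : V) :
    koszul g X Y Z p + koszul g X Z Y p = vAct X (gFun g Y Z) p := by
  simp only [koszul, gFun_comm hsymm Z Y, gFun_comm hsymm Y X, gFun_comm hsymm X Z,
    gFun_vBracket_swap X Z Y, gFun_vBracket_swap Z Y X, gFun_vBracket_swap Y X Z, Pi.neg_apply]
  ring

lemma koszul_sub_koszul_swap (hsymm : ∀ p : V, ∀ u v : V, g p u v = g p v u)
    (X Y Z : V → V) (p : V) :
    koszul g X Y Z p - koszul g Y X Z p = gFun g (vBracket X Y) Z p := by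
  simp only [koszul, gFun_comm hsymm X Z, gFun_comm hsymm Z Y, gFun_comm hsymm Y X,
    gFun_vBracket_swap Y X Z, gFun_vBracket_swap X Z Y, gFun_vBracket_swap Z Y X, Pi.neg_apply]
  rw [gFun_comm hsymm (vBracket X Y) Z]
  ring

end Koszul

structure IsKoszulDerivative {V : Type*} [NormedAddCommGroup V] [NormedSpace ℝ V] (U : Set V)
    (g : V → V →L[ℝ] V →L[ℝ] ℝ) (D : (V → V) → (V → V) → (V → V)) : Prop where
  contDiffOn : ∀ X Y : V → V, ContDiffOn ℝ (⊤ : ℕ∞) X U → ContDiffOn ℝ (⊤ : ℕ∞) Y U →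
    ContDiffOn ℝ (⊤ : ℕ∞) (D X Y) U
  apply_eq_koszul : ∀ X Y Z : V → V, ContDiffOn ℝ (⊤ : ℕ∞) X U →
    ContDiffOn ℝ (⊤ : ℕ∞) Y U → ContDiffOn ℝ (⊤ : ℕ∞) Z U →
    ∀ p ∈ U, g p (D X Y p) (Z p) = koszul g X Y Z p

namespace IsKoszulDerivative

variable {V : Type*} [NormedAddCommGroup V] [NormedSpace ℝ V] {U : Set V}
  {g : V → V →L[ℝ] V →L[ℝ] ℝ} {D : (V → V) → (V → V) → (V → V)} {A B C : V → V} {p : V}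

lemma vAct_gFun (hsymm : ∀ p : V, ∀ u v : V, g p u v = g p v u)
    (hD : IsKoszulDerivative U g D) (hA : ContDiffOn ℝ (⊤ : ℕ∞) A U)
    (hB : ContDiffOn ℝ (⊤ : ℕ∞) B U) (hC : ContDiffOn ℝ (⊤ : ℕ∞) C U) (hp : p ∈ U) :
    vAct A (gFun g B C) p = g p (D A B p) (C p) + g p (B p) (D A C p) := by
  rw [← koszul_add_koszul_swap hsymm A B C p, ← hD.apply_eq_koszul A B C hA hB hC p hp,
    ← hD.apply_eq_koszul A C B hA hC hB p hp, hsymm p (D A C p)]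

lemma apply_eq_add_vBracket (hsymm : ∀ p : V, ∀ u v : V, g p u v = g p v u)
    (hD : IsKoszulDerivative U g D) (hA : ContDiffOn ℝ (⊤ : ℕ∞) A U)
    (hB : ContDiffOn ℝ (⊤ : ℕ∞) B U) (hC : ContDiffOn ℝ (⊤ : ℕ∞) C U) (hp : p ∈ U) :
    g p (D A B p) (C p) = g p (D B A p) (C p) + g p (vBracket A B p) (C p) := by
  have h := koszul_sub_koszul_swap hsymm A B C p
  rw [← hD.apply_eq_koszul A B C hA hB hC p hp, ← hD.apply_eq_koszul B A C hB hA hC p hp] at h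
  exact eq_add_of_sub_eq' h

/-- Stands in for additivity of `D` in its second argument, which fails in general when `g` is
degenerate. -/
lemma apply_eq_add_of_forall_apply_eq_add (hU : IsOpen U) (hg : ContDiffOn ℝ (⊤ : ℕ∞) g U)
    (hsymm : ∀ p : V, ∀ u v : V, g p u v = g p v u) (hD : IsKoszulDerivative U g D)
    {X T : V → V} (hX : ContDiffOn ℝ (⊤ : ℕ∞) X U) (hA : ContDiffOn ℝ (⊤ : ℕ∞) A U)
    (hB : ContDiffOn ℝ (⊤ : ℕ∞) B U) (hC : ContDiffOn ℝ (⊤ : ℕ∞) C U)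
    (hT : ContDiffOn ℝ (⊤ : ℕ∞) T U)
    (hABC : ∀ S : V → V, ContDiffOn ℝ (⊤ : ℕ∞) S U →
      ∀ q ∈ U, g q (A q) (S q) = g q (B q) (S q) + g q (C q) (S q))
    (hp : p ∈ U) :
    g p (D X A p) (T p) = g p (D X B p) (T p) + g p (D X C p) (T p) := by
  have hgA : vAct X (gFun g A T) p = vAct X (gFun g B T) p + vAct X (gFun g C T) p := by
    rw [vAct_congr_of_eqOn (f₁ := gFun g A T) (f₂ := gFun g B T + gFun g C T) hU
        (fun q hq => hABC T hT q hq) X hp,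
      vAct_add X ((contDiffOn_gFun hg hB hT).differentiableAt_of_isOpen hU hp)
        ((contDiffOn_gFun hg hC hT).differentiableAt_of_isOpen hU hp)]
  have hDXT := hABC (D X T) (hD.contDiffOn X T hX hT) p hp
  rw [vAct_gFun hsymm hD hX hA hT hp, vAct_gFun hsymm hD hX hB hT hp,
    vAct_gFun hsymm hD hX hC hT hp] at hgA
  linarith

lemma apply_sub_sub_eq_vBracket_vBracket (hU : IsOpen U) (hg : ContDiffOn ℝ (⊤ : ℕ∞) g U)
    (hsymm : ∀ p : V, ∀ u v : V, g p u v = g p v u) (hD : IsKoszulDerivative U g D)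
    {X Y Z T : V → V} (hX : ContDiffOn ℝ (⊤ : ℕ∞) X U) (hY : ContDiffOn ℝ (⊤ : ℕ∞) Y U)
    (hZ : ContDiffOn ℝ (⊤ : ℕ∞) Z U) (hT : ContDiffOn ℝ (⊤ : ℕ∞) T U) (hp : p ∈ U) :
    g p (D X (D Y Z) p) (T p) - g p (D X (D Z Y) p) (T p) - g p (D (vBracket Y Z) X p) (T p)
      = g p (vBracket X (vBracket Y Z) p) (T p) := by
  have hYZ := contDiffOn_vBracket hU hY hZ
  have hDX : g p (D X (D Y Z) p) (T p)
      = g p (D X (D Z Y) p) (T p) + g p (D X (vBracket Y Z) p) (T p) :=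
    apply_eq_add_of_forall_apply_eq_add hU hg hsymm hD hX (hD.contDiffOn Y Z hY hZ)
      (hD.contDiffOn Z Y hZ hY) hYZ hT
      (fun S hS q hq => apply_eq_add_vBracket hsymm hD hY hZ hS hq) hp
  have hXYZ := apply_eq_add_vBracket hsymm hD hX hYZ hT hp
  linarith

end IsKoszulDerivative

/-- the Riemann curvature tensor satisfies the first Bianchi identity:
`R(Y,Z,X,T) + R(Z,X,Y,T) + R(X,Y,Z,T) = 0` on `U`. -/
theorem riem_first_bianchi
    (U : Set E) (hU : IsOpen U)
    (g : E → E →L[ℝ] E →L[ℝ] ℝ) (hg : ContDiffOn ℝ (⊤ : ℕ∞) g U)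
    (hsymm : ∀ p : E, ∀ u v : E, g p u v = g p v u)
    (D : (E → E) → (E → E) → (E → E))
    (hDsmooth : ∀ X Y : E → E, ContDiffOn ℝ (⊤ : ℕ∞) X U → ContDiffOn ℝ (⊤ : ℕ∞) Y U →
      ContDiffOn ℝ (⊤ : ℕ∞) (D X Y) U)
    (hDK : ∀ X Y Z : E → E, ContDiffOn ℝ (⊤ : ℕ∞) X U → ContDiffOn ℝ (⊤ : ℕ∞) Y U →
      ContDiffOn ℝ (⊤ : ℕ∞) Z U → ∀ p ∈ U, g p (D X Y p) (Z p) = koszul g X Y Z p)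
    (X Y Z T : E → E) (hX : ContDiffOn ℝ (⊤ : ℕ∞) X U) (hY : ContDiffOn ℝ (⊤ : ℕ∞) Y U)
    (hZ : ContDiffOn ℝ (⊤ : ℕ∞) Z U) (hT : ContDiffOn ℝ (⊤ : ℕ∞) T U) :
    ∀ p ∈ U, riem g D Y Z X T p + riem g D Z X Y T p + riem g D X Y Z T p = 0 := by
  intro p hp
  have hD : IsKoszulDerivative U g D := ⟨hDsmooth, hDK⟩
  have hXYZ := hD.apply_sub_sub_eq_vBracket_vBracket hU hg hsymm hX hY hZ hT hp
  have hYZX := hD.apply_sub_sub_eq_vBracket_vBracket hU hg hsymm hY hZ hX hT hp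
  have hZXY := hD.apply_sub_sub_eq_vBracket_vBracket hU hg hsymm hZ hX hY hT hp
  have hJacobi : g p (vBracket X (vBracket Y Z) p) (T p) + g p (vBracket Y (vBracket Z X) p) (T p)
      + g p (vBracket Z (vBracket X Y) p) (T p) = 0 := by
    rw [← add_apply, ← add_apply, ← map_add, ← map_add, vBracket_jacobi hU hX hY hZ hp,
      map_zero, zero_apply]
  simp only [riem, map_sub, sub_apply]
  linarith
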